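/- In the symplectic group G = Sp_{2n}(F) over a field F, the set {g ∈ G : α_k(g) ≠ 0 for all 1 ≤ k ≤ n} equals the Bruhat cell B w_0 N, where B is the standard Borel subgroup, N its unipotent radical, w_0 the longest Weyl element, and α_k(g) is the determinant of the k×k lower-left minor with rows 2n+1-k,...,2n and columns 1,...,k. -/

import Mathlib

/-- The `k × k` lower-left minor `α_k(g)` of a `2n × 2n` matrix. -/
def alphaMinor {F : Type*} [CommRing F] (n k : ℕ) (hk : k ≤ 2 * n)
    (g : Matrix (Fin (2 * n)) (Fin (2 * n)) F) : F :=
  Matrix.det (Matrix.of fun s t : Fin k =>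
    g ⟨2 * n - k + s.val, by have := s.isLt; omega⟩ ⟨t.val, by have := t.isLt; omega⟩)

/-- The antidiagonal symplectic form defining `Sp_{2n}`. -/
def Jsp {F : Type*} [CommRing F] (n : ℕ) : Matrix (Fin (2 * n)) (Fin (2 * n)) F :=
  Matrix.of fun i j =>
    if i.val + j.val = 2 * n - 1 then (if i.val < n then 1 else -1) else 0

/-!
Put `M = J⁻¹ g`. Conjugation by `J` exchanges upper and lower triangular matrices, so
`g = b J u` with `b` upper triangular and `u` upper unitriangular exactly when `M = L U` with `L`
lower triangular invertible and `U` upper unitriangular; the leading principal minors of `M`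
are, up to signs, the minors `α_k(g)`. A matrix has such an LU decomposition iff its leading
principal minors are nonzero. For symplectic `M` the first `n` of them suffice: the symplectic
relations force the Schur complement of the leading `n × n` block `A` to be `R (Aᵀ)⁻¹ R`, with
`R` the order-reversing permutation matrix, and this inherits an LU decomposition from `A`.
Finally, the factors `b` and `u` are automatically symplectic: the involution
`X ↦ J⁻¹ (Xᵀ)⁻¹ J`, whose fixed points are the symplectic matrices, fixes `g` and `J` and
preserves the shape of the decomposition, so by uniqueness of the decomposition it fixes `b`
and `u`.
-/

open Matrix

namespace Matrix

section Triangular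

variable {ι R : Type*} {A B : Matrix ι ι R}

theorem IsUpperTriangular.submatrix_of_strictMono [Zero R] {κ : Type*} [Preorder ι] [Preorder κ]
    {f : κ → ι} (hA : A.IsUpperTriangular) (hf : StrictMono f) :
    (A.submatrix f f).IsUpperTriangular :=
  fun _ _ h => hA (hf h)

theorem IsLowerTriangular.submatrix_of_strictMono [Zero R] {κ : Type*} [Preorder ι] [Preorder κ]
    {f : κ → ι} (hA : A.IsLowerTriangular) (hf : StrictMono f) :
    (A.submatrix f f).IsLowerTriangular :=
  fun _ _ h => hA (hf h)

theorem IsUpperTriangular.transpose [Zero R] [LT ι] (hA : A.IsUpperTriangular) :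
    Aᵀ.IsLowerTriangular :=
  fun _ _ h => hA h

theorem IsLowerTriangular.transpose [Zero R] [LT ι] (hA : A.IsLowerTriangular) :
    Aᵀ.IsUpperTriangular :=
  fun _ _ h => hA h

theorem eq_one_of_isLowerTriangular_of_isUpperTriangular [Zero R] [One R] [DecidableEq ι]
    [LinearOrder ι] (hl : A.IsLowerTriangular) (hu : A.IsUpperTriangular) (hd : ∀ i, A i i = 1) :
    A = 1 := by
  ext i j
  rcases lt_trichotomy i j with h | rfl | h
  · rw [hl h, one_apply_ne h.ne]
  · rw [hd i, one_apply_eq]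
  · rw [hu h, one_apply_ne h.ne']

variable [Fintype ι] {α : Type*} [LinearOrder α] {b : ι → α}

theorem BlockTriangular.mul_apply_self [NonUnitalNonAssocSemiring R] (hA : A.BlockTriangular b)
    (hB : B.BlockTriangular b) (hb : Function.Injective b) (i : ι) :
    (A * B) i i = A i i * B i i := by
  rw [mul_apply]
  refine Finset.sum_eq_single i (fun k _ hk => ?_) (by simp)
  rcases lt_or_gt_of_ne (hb.ne hk) with h | h
  · rw [hA h, zero_mul]
  · rw [hB h, mul_zero]

variable [DecidableEq ι]

theorem BlockTriangular.inv [CommRing R] (hA : A.BlockTriangular b) (hd : IsUnit A.det) :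
    A⁻¹.BlockTriangular b :=
  letI := A.invertibleOfIsUnitDet hd
  blockTriangular_inv_of_blockTriangular hA

theorem BlockTriangular.inv_apply_self {K : Type*} [Field K] {M : Matrix ι ι K}
    (hM : M.BlockTriangular b) (hb : Function.Injective b) (hd : M.det ≠ 0) (i : ι) :
    M⁻¹ i i = (M i i)⁻¹ := by
  have h := hM.mul_apply_self (hM.inv hd.isUnit) hb i
  rw [mul_nonsing_inv M hd.isUnit, one_apply_eq] at h
  exact eq_inv_of_mul_eq_one_right h.symm

variable [LinearOrder ι] [CommRing R]

theorem IsUpperTriangular.diag_ne_zero (hA : A.IsUpperTriangular) (hd : A.det ≠ 0) (i : ι) :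
    A i i ≠ 0 := by
  rw [det_of_isUpperTriangular hA] at hd
  exact fun h0 => hd (Finset.prod_eq_zero (Finset.mem_univ i) h0)

theorem IsUpperTriangular.det_eq_one (hA : A.IsUpperTriangular) (hd : ∀ i, A i i = 1) :
    A.det = 1 := by
  simp [det_of_isUpperTriangular hA, hd]

variable [IsDomain R]

theorem IsUpperTriangular.det_ne_zero (hA : A.IsUpperTriangular) (hd : ∀ i, A i i ≠ 0) :
    A.det ≠ 0 := by
  simpa [det_of_isUpperTriangular hA, Finset.prod_ne_zero_iff] using hd

theorem IsLowerTriangular.det_ne_zero (hA : A.IsLowerTriangular) (hd : ∀ i, A i i ≠ 0) :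
    A.det ≠ 0 := by
  simpa [det_of_isLowerTriangular A hA, Finset.prod_ne_zero_iff] using hd

end Triangular

theorem schur_complement_eq_conj_inv_transpose {ι R : Type*} [Fintype ι] [DecidableEq ι]
    [CommRing R] {A B C D P : Matrix ι ι R} (hP : P * P = 1) (hA : IsUnit A.det)
    (h₁ : Aᵀ * P * C = Cᵀ * P * A) (h₂ : Aᵀ * P * D - Cᵀ * P * B = P) :
    D - C * A⁻¹ * B = P * (Aᵀ)⁻¹ * P := by
  have hAT : IsUnit Aᵀ.det := by rwa [det_transpose]
  have key : Aᵀ * (P * (D - C * A⁻¹ * B)) = P := by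
    calc _ = Aᵀ * P * D - Aᵀ * P * C * A⁻¹ * B := by
          simp only [Matrix.mul_sub, Matrix.mul_assoc]
      _ = P := by rw [h₁, mul_nonsing_inv_cancel_right _ _ hA, h₂]
  calc D - C * A⁻¹ * B = P * (P * (D - C * A⁻¹ * B)) := by
        rw [← Matrix.mul_assoc, hP, Matrix.one_mul]
    _ = P * ((Aᵀ)⁻¹ * (Aᵀ * (P * (D - C * A⁻¹ * B)))) := by
      rw [nonsing_inv_mul_cancel_left _ _ hAT]
    _ = P * (Aᵀ)⁻¹ * P := by rw [key, Matrix.mul_assoc]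

variable {F : Type*} [Field F]

section LU

variable {ι : Type*} [Fintype ι] [LinearOrder ι] {A : Matrix ι ι F}

def HasLU (A : Matrix ι ι F) : Prop :=
  ∃ L U : Matrix ι ι F, L.IsLowerTriangular ∧ (∀ i, L i i ≠ 0) ∧
    U.IsUpperTriangular ∧ (∀ i, U i i = 1) ∧ A = L * U

theorem HasLU.reindex_orderIso {κ : Type*} [Fintype κ] [LinearOrder κ]
    (e : ι ≃o κ) (h : HasLU A) : HasLU (reindex e.toEquiv e.toEquiv A) := by
  obtain ⟨L, U, hL, hLd, hU, hUd, rfl⟩ := h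
  refine ⟨reindex e.toEquiv e.toEquiv L, reindex e.toEquiv e.toEquiv U,
    blockTriangular_reindex_iff.mpr fun i j hij => hL (by simpa using hij),
    fun i => by simpa using hLd _,
    blockTriangular_reindex_iff.mpr fun i j hij => hU (by simpa using hij),
    fun i => by simpa using hUd _,
    (submatrix_mul_equiv _ _ _ _ _).symm⟩

variable [DecidableEq ι]

theorem lu_unique {L₁ L₂ U₁ U₂ : Matrix ι ι F} (hL₁ : L₁.IsLowerTriangular)
    (hL₂ : L₂.IsLowerTriangular) (hL₂d : ∀ i, L₂ i i ≠ 0) (hU₁ : U₁.IsUpperTriangular)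
    (hU₁d : ∀ i, U₁ i i = 1) (hU₂ : U₂.IsUpperTriangular) (hU₂d : ∀ i, U₂ i i = 1)
    (h : L₁ * U₁ = L₂ * U₂) : L₁ = L₂ ∧ U₁ = U₂ := by
  have hL₂u : IsUnit L₂.det := (hL₂.det_ne_zero hL₂d).isUnit
  have hU₁u : IsUnit U₁.det := by simp [hU₁.det_eq_one hU₁d]
  -- `L₂⁻¹ L₁ = U₂ U₁⁻¹` is both lower and upper triangular, with unit diagonal.
  set D := L₂⁻¹ * L₁ with hDdef
  have hDU : D = U₂ * U₁⁻¹ := by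
    rw [hDdef, ← mul_nonsing_inv_cancel_right U₁ L₁ hU₁u, h, Matrix.mul_assoc,
      nonsing_inv_mul_cancel_left _ _ hL₂u]
  have hDlow : D.IsLowerTriangular := (hL₂.inv hL₂u).mul hL₁
  have hDup : D.IsUpperTriangular := by
    rw [hDU]; exact hU₂.mul (hU₁.inv hU₁u)
  have hU : D * U₁ = U₂ := by rw [hDU, nonsing_inv_mul_cancel_right _ _ hU₁u]
  have hD1 : D = 1 := by
    refine eq_one_of_isLowerTriangular_of_isUpperTriangular hDlow hDup fun i => ?_
    have := hDup.mul_apply_self hU₁ Function.injective_id i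
    rwa [hU, hU₂d, hU₁d, mul_one, eq_comm] at this
  refine ⟨?_, by rwa [hD1, Matrix.one_mul] at hU⟩
  rw [← mul_nonsing_inv_cancel_left L₂ L₁ hL₂u, ← hDdef, hD1, Matrix.mul_one]

theorem HasLU.det_ne_zero (h : HasLU A) : A.det ≠ 0 := by
  obtain ⟨L, U, hL, hLd, hU, hUd, rfl⟩ := h
  rw [det_mul, hU.det_eq_one hUd, mul_one]
  exact hL.det_ne_zero hLd

theorem hasLU_of_unique_of_det_ne_zero [Unique ι] (hA : A.det ≠ 0) : HasLU A := by
  refine ⟨A, 1, fun i j hij => absurd hij (by simp [Subsingleton.elim i j]), fun i => ?_,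
    blockTriangular_one, fun i => one_apply_eq i, (Matrix.mul_one A).symm⟩
  rw [Subsingleton.elim i default]
  rwa [det_unique] at hA

end LU

section LeadingMinor

variable {m : ℕ}

def leadingMinor {R : Type*} [CommRing R] (k : ℕ) (hk : k ≤ m)
    (A : Matrix (Fin m) (Fin m) R) : R :=
  (A.submatrix (Fin.castLE hk) (Fin.castLE hk)).det

theorem submatrix_castLE_mul_of_isLowerTriangular {R : Type*} [NonUnitalNonAssocSemiring R]
    {k : ℕ} (hk : k ≤ m) {L : Matrix (Fin m) (Fin m) R} (hL : L.IsLowerTriangular)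
    (U : Matrix (Fin m) (Fin m) R) :
    (L * U).submatrix (Fin.castLE hk) (Fin.castLE hk) =
      L.submatrix (Fin.castLE hk) (Fin.castLE hk) *
        U.submatrix (Fin.castLE hk) (Fin.castLE hk) := by
  ext s t
  simp only [submatrix_apply, mul_apply]
  refine (Finset.sum_subset (Finset.subset_univ (Finset.univ.map (Fin.castLEEmb hk)))
    fun j _ hj => ?_).symm.trans (Finset.sum_map _ _ _)
  have hsj : Fin.castLE hk s < j := by
    by_contra! hjs
    refine hj (Finset.mem_map.mpr ⟨⟨j, ?_⟩, Finset.mem_univ _, rfl⟩)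
    exact lt_of_le_of_lt (Fin.le_def.mp hjs) s.isLt
  exact mul_eq_zero_of_left (hL hsj) _

theorem HasLU.leadingMinor_ne_zero {A : Matrix (Fin m) (Fin m) F} (h : HasLU A) {k : ℕ}
    (hk : k ≤ m) : leadingMinor k hk A ≠ 0 := by
  obtain ⟨L, U, hL, hLd, hU, hUd, rfl⟩ := h
  rw [leadingMinor, submatrix_castLE_mul_of_isLowerTriangular hk hL, det_mul,
    (hU.submatrix_of_strictMono (Fin.strictMono_castLE hk)).det_eq_one fun i => hUd _, mul_one]
  exact (hL.submatrix_of_strictMono (Fin.strictMono_castLE hk)).det_ne_zero fun i => hLd _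

theorem IsUpperTriangular.reindex_fromBlocks {R : Type*} [Zero R] {a b : ℕ}
    {W : Matrix (Fin a) (Fin a) R} {X : Matrix (Fin a) (Fin b) R} {Z : Matrix (Fin b) (Fin b) R} (hW : W.IsUpperTriangular)
    (hZ : Z.IsUpperTriangular) :
    (reindex finSumFinEquiv finSumFinEquiv (fromBlocks W X 0 Z)).IsUpperTriangular := by
  intro i j hij
  induction i using Fin.addCases <;> induction j using Fin.addCases <;>
    simp only [reindex_apply, submatrix_apply, finSumFinEquiv_symm_apply_castAdd,
      finSumFinEquiv_symm_apply_natAdd, fromBlocks_apply₁₁, fromBlocks_apply₁₂,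
      fromBlocks_apply₂₁, fromBlocks_apply₂₂, id, Fin.lt_def, Fin.val_castAdd,
      Fin.val_natAdd] at hij ⊢
  · exact hW hij
  · omega
  · rfl
  · exact hZ (by simpa using hij)

theorem IsLowerTriangular.reindex_fromBlocks {R : Type*} [Zero R] {a b : ℕ}
    {W : Matrix (Fin a) (Fin a) R} {Y : Matrix (Fin b) (Fin a) R} {Z : Matrix (Fin b) (Fin b) R} (hW : W.IsLowerTriangular)
    (hZ : Z.IsLowerTriangular) :
    (reindex finSumFinEquiv finSumFinEquiv (fromBlocks W 0 Y Z)).IsLowerTriangular := by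
  intro i j hij
  induction i using Fin.addCases <;> induction j using Fin.addCases <;>
    simp only [reindex_apply, submatrix_apply, finSumFinEquiv_symm_apply_castAdd,
      finSumFinEquiv_symm_apply_natAdd, fromBlocks_apply₁₁, fromBlocks_apply₁₂,
      fromBlocks_apply₂₁, fromBlocks_apply₂₂, OrderDual.toDual_lt_toDual, Fin.lt_def,
      Fin.val_castAdd, Fin.val_natAdd] at hij ⊢
  · exact hW hij
  · rfl
  · omega
  · exact hZ (by simpa using hij)

theorem HasLU.reindex_fromBlocks {a b : ℕ} {A : Matrix (Fin a) (Fin a) F}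
    {B : Matrix (Fin a) (Fin b) F} {C : Matrix (Fin b) (Fin a) F} {D : Matrix (Fin b) (Fin b) F}
    (hA : HasLU A) (hS : HasLU (D - C * A⁻¹ * B)) :
    HasLU (reindex finSumFinEquiv finSumFinEquiv (fromBlocks A B C D)) := by
  obtain ⟨LA, UA, hLA, hLAd, hUA, hUAd, rfl⟩ := hA
  obtain ⟨LS, US, hLS, hLSd, hUS, hUSd, hLUS⟩ := hS
  have hLAu : IsUnit LA.det := (hLA.det_ne_zero hLAd).isUnit
  have hUAu : IsUnit UA.det := by simp [hUA.det_eq_one hUAd]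
  refine ⟨reindex finSumFinEquiv finSumFinEquiv (fromBlocks LA 0 (C * UA⁻¹) LS),
    reindex finSumFinEquiv finSumFinEquiv (fromBlocks UA (LA⁻¹ * B) 0 US),
    IsLowerTriangular.reindex_fromBlocks hLA hLS, fun i => ?_,
    IsUpperTriangular.reindex_fromBlocks hUA hUS, fun i => ?_, ?_⟩
  · induction i using Fin.addCases <;> simp [hLAd, hLSd]
  · induction i using Fin.addCases <;> simp [hUAd, hUSd]
  simp only [reindex_apply, submatrix_mul_equiv, fromBlocks_multiply]
  congr 2
  · simp
  · simp [mul_nonsing_inv_cancel_left _ _ hLAu]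
  · simp [nonsing_inv_mul_cancel_right _ _ hUAu]
  · rw [← hLUS, Matrix.mul_inv_rev]
    simp only [Matrix.mul_assoc]
    abel

theorem hasLU_of_leadingMinor_ne_zero :
    ∀ {m : ℕ} {A : Matrix (Fin m) (Fin m) F},
      (∀ k (_ : 1 ≤ k) (hk : k ≤ m), leadingMinor k hk A ≠ 0) → HasLU A
  | 0, A, _ => ⟨A, 1, fun i => i.elim0, fun i => i.elim0, fun i => i.elim0, fun i => i.elim0,
      (Matrix.mul_one A).symm⟩
  | m + 1, A, h => by
    -- Split off the last row and column; the `1 × 1` Schur complement is nonzero because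
    -- `det A = det A₁₁ * det S`.
    set N := reindex finSumFinEquiv.symm finSumFinEquiv.symm A
    have hA : A = reindex finSumFinEquiv finSumFinEquiv
        (fromBlocks N.toBlocks₁₁ N.toBlocks₁₂ N.toBlocks₂₁ N.toBlocks₂₂) := by
      rw [fromBlocks_toBlocks]
      simp [N]
    have h₁₁ : HasLU N.toBlocks₁₁ :=
      hasLU_of_leadingMinor_ne_zero fun k hk₁ hk => h k hk₁ (hk.trans m.le_succ)
    let := N.toBlocks₁₁.invertibleOfIsUnitDet h₁₁.det_ne_zero.isUnit
    have hdet : A.det = N.toBlocks₁₁.det *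
        (N.toBlocks₂₂ - N.toBlocks₂₁ * N.toBlocks₁₁⁻¹ * N.toBlocks₁₂).det := by
      conv_lhs => rw [hA]
      rw [det_reindex_self, det_fromBlocks₁₁, invOf_eq_nonsing_inv]
    have hA0 : A.det ≠ 0 := h (m + 1) le_add_self le_rfl
    rw [hA]
    exact h₁₁.reindex_fromBlocks
      (hasLU_of_unique_of_det_ne_zero (right_ne_zero_of_mul (hdet ▸ hA0)))

theorem permMatrix_revPerm_mul_mul {R : Type*} [NonAssocSemiring R]
    (X : Matrix (Fin m) (Fin m) R) :
    Fin.revPerm.permMatrix R * X * Fin.revPerm.permMatrix R = X.submatrix Fin.rev Fin.rev := by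
  rw [Equiv.Perm.permMatrix, PEquiv.toMatrix_toPEquiv_mul, PEquiv.mul_toMatrix_toPEquiv,
    Fin.revPerm_symm, submatrix_submatrix]
  rfl

theorem permMatrix_revPerm_mul_self {R : Type*} [NonAssocSemiring R] :
    Fin.revPerm.permMatrix R * Fin.revPerm.permMatrix R = (1 : Matrix (Fin m) (Fin m) R) := by
  have h := permMatrix_revPerm_mul_mul (1 : Matrix (Fin m) (Fin m) R)
  rw [Matrix.mul_one] at h
  exact h.trans (submatrix_one_equiv Fin.revPerm)

theorem HasLU.inv_transpose_submatrix_rev {A : Matrix (Fin m) (Fin m) F}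
    (h : HasLU A) : HasLU ((Aᵀ)⁻¹.submatrix Fin.rev Fin.rev) := by
  obtain ⟨L, U, hL, hLd, hU, hUd, rfl⟩ := h
  have hdL : Lᵀ.det ≠ 0 := by rw [det_transpose]; exact hL.det_ne_zero hLd
  have hdU : Uᵀ.det ≠ 0 := by rw [det_transpose, hU.det_eq_one hUd]; exact one_ne_zero
  refine ⟨(Lᵀ)⁻¹.submatrix Fin.rev Fin.rev, (Uᵀ)⁻¹.submatrix Fin.rev Fin.rev,
    fun i j h => hL.transpose.inv hdL.isUnit (Fin.rev_lt_rev.mpr h), fun i => ?_,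
    fun i j h => hU.transpose.inv hdU.isUnit (Fin.rev_lt_rev.mpr h), fun i => ?_, ?_⟩
  · rw [submatrix_apply, hL.transpose.inv_apply_self Function.injective_id hdL, transpose_apply]
    exact inv_ne_zero (hLd _)
  · rw [submatrix_apply, hU.transpose.inv_apply_self OrderDual.toDual.injective hdU,
      transpose_apply, hUd, inv_one]
  · rw [transpose_mul, Matrix.mul_inv_rev]
    exact (submatrix_mul_equiv _ _ _ Fin.revPerm _).symm

end LeadingMinor

end Matrix

section Symplectic

variable {F : Type*} [Field F] {n : ℕ}

def jspSign (n : ℕ) (i : Fin (2 * n)) : F := if (i : ℕ) < n then 1 else -1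

theorem jspSign_rev (i : Fin (2 * n)) : jspSign (F := F) n (Fin.rev i) = -jspSign n i := by
  have := i.isLt
  by_cases h : (i : ℕ) < n
  · rw [jspSign, jspSign, if_pos h, if_neg (by rw [Fin.val_rev]; omega)]
  · rw [jspSign, jspSign, if_neg h, if_pos (by rw [Fin.val_rev]; omega), neg_neg]

theorem jspSign_mul_self (i : Fin (2 * n)) : jspSign (F := F) n i * jspSign n i = 1 := by
  unfold jspSign; split_ifs <;> simp

theorem jspSign_ne_zero (i : Fin (2 * n)) : jspSign (F := F) n i ≠ 0 :=
  left_ne_zero_of_mul_eq_one (jspSign_mul_self i)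

theorem Jsp_apply (i j : Fin (2 * n)) :
    Jsp (F := F) n i j = if j = Fin.rev i then jspSign n i else 0 := by
  have : (i : ℕ) + j = 2 * n - 1 ↔ j = Fin.rev i := by
    rw [Fin.ext_iff, Fin.val_rev]; omega
  simp only [Jsp, of_apply, jspSign, this]

theorem Jsp_mul_apply (X : Matrix (Fin (2 * n)) (Fin (2 * n)) F) (i j : Fin (2 * n)) :
    (Jsp (F := F) n * X) i j = jspSign n i * X (Fin.rev i) j := by
  simp [mul_apply, Jsp_apply, ite_mul]

theorem mul_Jsp_apply (X : Matrix (Fin (2 * n)) (Fin (2 * n)) F) (i j : Fin (2 * n)) :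
    (X * Jsp (F := F) n) i j = -jspSign n j * X i (Fin.rev j) := by
  have hrev : ∀ k : Fin (2 * n), j = Fin.rev k ↔ k = Fin.rev j := fun k => by
    rw [eq_comm, Fin.rev_eq_iff]
  simp [mul_apply, Jsp_apply, hrev, jspSign_rev, mul_comm]

theorem Jsp_mul_Jsp : Jsp (F := F) n * Jsp n = -1 := by
  ext i j
  rw [Jsp_mul_apply, Jsp_apply, neg_apply, one_apply]
  by_cases h : i = j
  · subst h; simp [jspSign_rev, jspSign_mul_self]
  · simp [Fin.rev_rev, h, Ne.symm h]

theorem inv_Jsp : (Jsp (F := F) n)⁻¹ = -Jsp n :=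
  inv_eq_right_inv (by rw [mul_neg, Jsp_mul_Jsp, neg_neg])

theorem transpose_Jsp : (Jsp (F := F) n)ᵀ = -Jsp n := by
  ext i j
  rw [transpose_apply, neg_apply, Jsp_apply, Jsp_apply]
  by_cases h : j = Fin.rev i
  · subst h; simp [jspSign_rev]
  · have h' : i ≠ Fin.rev j := fun h' => h (by rw [h', Fin.rev_rev])
    simp [h, h']

theorem transpose_inv_Jsp : ((Jsp (F := F) n)⁻¹)ᵀ = Jsp n := by
  rw [inv_Jsp, transpose_neg, transpose_Jsp, neg_neg]

theorem isUnit_det_Jsp : IsUnit (Jsp (F := F) n).det :=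
  isUnit_det_of_right_inverse (by rw [mul_neg, Jsp_mul_Jsp, neg_neg])

theorem det_ne_zero_of_symplectic {g : Matrix (Fin (2 * n)) (Fin (2 * n)) F}
    (hg : gᵀ * Jsp n * g = Jsp n) : g.det ≠ 0 := by
  intro h0
  have h := congrArg det hg
  rw [det_mul, det_mul, det_transpose, h0, mul_zero] at h
  exact isUnit_det_Jsp.ne_zero h.symm

theorem symplectic_inv_Jsp_mul {g : Matrix (Fin (2 * n)) (Fin (2 * n)) F}
    (hg : gᵀ * Jsp n * g = Jsp n) :
    ((Jsp n)⁻¹ * g)ᵀ * Jsp n * ((Jsp n)⁻¹ * g) = Jsp n := by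
  rw [transpose_mul, transpose_inv_Jsp]
  simp only [Matrix.mul_assoc]
  rw [mul_nonsing_inv_cancel_left _ _ isUnit_det_Jsp, ← Matrix.mul_assoc, hg]

theorem inv_Jsp_mul_mul_Jsp_apply (X : Matrix (Fin (2 * n)) (Fin (2 * n)) F)
    (i j : Fin (2 * n)) :
    ((Jsp n)⁻¹ * X * Jsp n : Matrix (Fin (2 * n)) (Fin (2 * n)) F) i j =
      jspSign n i * jspSign n j * X (Fin.rev i) (Fin.rev j) := by
  rw [mul_Jsp_apply, inv_Jsp, Matrix.neg_mul, neg_apply, Jsp_mul_apply]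
  ring

theorem inv_Jsp_mul_mul_Jsp_apply_self (X : Matrix (Fin (2 * n)) (Fin (2 * n)) F)
    (i : Fin (2 * n)) : ((Jsp n)⁻¹ * X * Jsp n : Matrix (Fin (2 * n)) (Fin (2 * n)) F) i i =
      X (Fin.rev i) (Fin.rev i) := by
  rw [inv_Jsp_mul_mul_Jsp_apply, jspSign_mul_self, one_mul]

theorem Jsp_mul_mul_inv_Jsp (X : Matrix (Fin (2 * n)) (Fin (2 * n)) F) :
    Jsp n * X * (Jsp n)⁻¹ = (Jsp n)⁻¹ * X * Jsp n := by
  simp only [inv_Jsp, Matrix.mul_neg, Matrix.neg_mul]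

theorem Matrix.IsUpperTriangular.inv_Jsp_mul_mul_Jsp
    {X : Matrix (Fin (2 * n)) (Fin (2 * n)) F} (hX : X.IsUpperTriangular) :
    ((Jsp n)⁻¹ * X * Jsp n).IsLowerTriangular := fun i j h => by
  rw [inv_Jsp_mul_mul_Jsp_apply]
  exact mul_eq_zero_of_right _ (hX (Fin.rev_lt_rev.mpr h))

theorem Matrix.IsLowerTriangular.inv_Jsp_mul_mul_Jsp
    {X : Matrix (Fin (2 * n)) (Fin (2 * n)) F} (hX : X.IsLowerTriangular) :
    ((Jsp n)⁻¹ * X * Jsp n).IsUpperTriangular := fun i j h => by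
  rw [inv_Jsp_mul_mul_Jsp_apply]
  exact mul_eq_zero_of_right _ (hX (Fin.rev_lt_rev.mpr h))

noncomputable def symplecticInvolution (n : ℕ) (X : Matrix (Fin (2 * n)) (Fin (2 * n)) F) :
    Matrix (Fin (2 * n)) (Fin (2 * n)) F :=
  (Jsp n)⁻¹ * (Xᵀ)⁻¹ * Jsp n

theorem symplecticInvolution_mul (X Y : Matrix (Fin (2 * n)) (Fin (2 * n)) F) :
    symplecticInvolution n (X * Y) = symplecticInvolution n X * symplecticInvolution n Y := by
  simp only [symplecticInvolution, transpose_mul, Matrix.mul_inv_rev, Matrix.mul_assoc,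
    mul_nonsing_inv_cancel_left _ _ isUnit_det_Jsp]

theorem symplecticInvolution_Jsp : symplecticInvolution n (Jsp (F := F) n) = Jsp n := by
  rw [symplecticInvolution, ← transpose_nonsing_inv, transpose_inv_Jsp,
    nonsing_inv_mul _ isUnit_det_Jsp, Matrix.one_mul]

theorem symplecticInvolution_eq_self_iff {X : Matrix (Fin (2 * n)) (Fin (2 * n)) F}
    (hX : X.det ≠ 0) : symplecticInvolution n X = X ↔ Xᵀ * Jsp n * X = Jsp n := by
  have hXT : IsUnit Xᵀ.det := by rw [det_transpose]; exact hX.isUnit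
  constructor
  · intro h
    calc Xᵀ * Jsp n * X = Xᵀ * Jsp n * symplecticInvolution n X := by rw [h]
      _ = Jsp n := by
        simp only [symplecticInvolution, ← Matrix.mul_assoc]
        rw [mul_nonsing_inv_cancel_right _ _ isUnit_det_Jsp, mul_nonsing_inv _ hXT,
          Matrix.one_mul]
  · intro h
    calc symplecticInvolution n X = (Jsp n)⁻¹ * (Xᵀ)⁻¹ * (Xᵀ * Jsp n * X) := by rw [h]; rfl
      _ = X := by
        simp only [Matrix.mul_assoc, nonsing_inv_mul_cancel_left _ _ hXT,
          nonsing_inv_mul_cancel_left _ _ isUnit_det_Jsp]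

theorem Matrix.IsUpperTriangular.isUpperTriangular_symplecticInvolution
    {X : Matrix (Fin (2 * n)) (Fin (2 * n)) F} (hX : X.IsUpperTriangular) (hd : X.det ≠ 0) :
    (symplecticInvolution n X).IsUpperTriangular :=
  Matrix.IsLowerTriangular.inv_Jsp_mul_mul_Jsp
    (hX.transpose.inv (by rw [det_transpose]; exact hd.isUnit))

theorem Matrix.IsUpperTriangular.symplecticInvolution_apply_self
    {X : Matrix (Fin (2 * n)) (Fin (2 * n)) F} (hX : X.IsUpperTriangular) (hd : X.det ≠ 0)
    (i : Fin (2 * n)) : symplecticInvolution n X i i = (X (Fin.rev i) (Fin.rev i))⁻¹ := by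
  rw [symplecticInvolution, inv_Jsp_mul_mul_Jsp_apply_self,
    hX.transpose.inv_apply_self OrderDual.toDual.injective (by rwa [det_transpose]),
    transpose_apply]

theorem bruhat_unique {b₁ b₂ u₁ u₂ : Matrix (Fin (2 * n)) (Fin (2 * n)) F}
    (hb₁ : b₁.IsUpperTriangular) (hb₂ : b₂.IsUpperTriangular) (hb₂d : ∀ i, b₂ i i ≠ 0)
    (hu₁ : u₁.IsUpperTriangular) (hu₁d : ∀ i, u₁ i i = 1) (hu₂ : u₂.IsUpperTriangular)
    (hu₂d : ∀ i, u₂ i i = 1) (h : b₁ * Jsp n * u₁ = b₂ * Jsp n * u₂) : b₁ = b₂ ∧ u₁ = u₂ := by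
  have hconj : ∀ b u : Matrix (Fin (2 * n)) (Fin (2 * n)) F,
      (Jsp n)⁻¹ * b * Jsp n * u = (Jsp n)⁻¹ * (b * Jsp n * u) := by
    simp [Matrix.mul_assoc]
  obtain ⟨hb, hu⟩ := lu_unique hb₁.inv_Jsp_mul_mul_Jsp hb₂.inv_Jsp_mul_mul_Jsp
    (fun i => by rw [inv_Jsp_mul_mul_Jsp_apply_self]; exact hb₂d _) hu₁ hu₁d hu₂ hu₂d
    (by rw [hconj, hconj, h])
  refine ⟨?_, hu⟩
  have hcancel : ∀ b : Matrix (Fin (2 * n)) (Fin (2 * n)) F,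
      Jsp n * ((Jsp n)⁻¹ * b * Jsp n) * (Jsp n)⁻¹ = b := by
    intro b
    simp only [← Matrix.mul_assoc]
    rw [mul_nonsing_inv_cancel_right _ _ isUnit_det_Jsp, mul_nonsing_inv _ isUnit_det_Jsp,
      Matrix.one_mul]
  rw [← hcancel b₁, hb, hcancel]

theorem hasLU_inv_Jsp_mul_iff {g : Matrix (Fin (2 * n)) (Fin (2 * n)) F}
    (hg : gᵀ * Jsp n * g = Jsp n) :
    HasLU ((Jsp n)⁻¹ * g) ↔ ∃ b u : Matrix (Fin (2 * n)) (Fin (2 * n)) F,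
      bᵀ * Jsp n * b = Jsp n ∧ b.IsUpperTriangular ∧ uᵀ * Jsp n * u = Jsp n ∧
        u.IsUpperTriangular ∧ (∀ i, u i i = 1) ∧ g = b * Jsp n * u := by
  constructor
  · rintro ⟨L, U, hL, hLd, hU, hUd, hLU⟩
    have hgb : g = (Jsp n)⁻¹ * L * Jsp n * Jsp n * U := by
      rw [← Jsp_mul_mul_inv_Jsp, nonsing_inv_mul_cancel_right _ _ isUnit_det_Jsp,
        Matrix.mul_assoc, ← hLU, mul_nonsing_inv_cancel_left _ _ isUnit_det_Jsp]
    set b := (Jsp n)⁻¹ * L * Jsp n with hb_def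
    have hb : b.IsUpperTriangular := hL.inv_Jsp_mul_mul_Jsp
    have hbd : ∀ i, b i i ≠ 0 := fun i => by
      rw [hb_def, inv_Jsp_mul_mul_Jsp_apply_self]; exact hLd _
    have hdb : b.det ≠ 0 := hb.det_ne_zero hbd
    have hdU : U.det ≠ 0 := by rw [hU.det_eq_one hUd]; exact one_ne_zero
    -- `symplecticInvolution` fixes `g` and `J` and maps `b J U` to a decomposition of the same
    -- shape, so by uniqueness it fixes `b` and `U`.
    have hθg : symplecticInvolution n g = g :=
      (symplecticInvolution_eq_self_iff (det_ne_zero_of_symplectic hg)).mpr hg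
    obtain ⟨hθb, hθU⟩ := bruhat_unique (hb.isUpperTriangular_symplecticInvolution hdb) hb hbd
      (hU.isUpperTriangular_symplecticInvolution hdU)
      (fun i => by rw [hU.symplecticInvolution_apply_self hdU, hUd, inv_one]) hU hUd
      (by rw [← hgb, ← hθg, hgb, symplecticInvolution_mul (b * Jsp n),
        symplecticInvolution_mul b, symplecticInvolution_Jsp])
    exact ⟨b, U, (symplecticInvolution_eq_self_iff hdb).mp hθb, hb,
      (symplecticInvolution_eq_self_iff hdU).mp hθU, hU, hUd, hgb⟩
  · rintro ⟨b, u, hbs, hb, -, hu, hud, rfl⟩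
    refine ⟨(Jsp n)⁻¹ * b * Jsp n, u, hb.inv_Jsp_mul_mul_Jsp, fun i => ?_, hu, hud,
      by simp only [Matrix.mul_assoc]⟩
    rw [inv_Jsp_mul_mul_Jsp_apply_self]
    exact hb.diag_ne_zero (det_ne_zero_of_symplectic hbs) _

theorem leadingMinor_inv_Jsp_mul_ne_zero_iff {k : ℕ} (hk : k ≤ 2 * n)
    (g : Matrix (Fin (2 * n)) (Fin (2 * n)) F) :
    leadingMinor k hk ((Jsp n)⁻¹ * g) ≠ 0 ↔ alphaMinor n k hk g ≠ 0 := by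
  set N : Matrix (Fin k) (Fin k) F := of fun s t : Fin k =>
    g ⟨2 * n - k + s.val, by have := s.isLt; omega⟩ ⟨t.val, by have := t.isLt; omega⟩
  have hsub : ((Jsp n)⁻¹ * g).submatrix (Fin.castLE hk) (Fin.castLE hk) =
      diagonal (fun s => -jspSign n (Fin.castLE hk s)) * N.submatrix Fin.revPerm id := by
    ext s t
    rw [submatrix_apply, inv_Jsp, Matrix.neg_mul, neg_apply, Jsp_mul_apply, diagonal_mul,
      submatrix_apply, neg_mul]
    congr 3
    ext
    simp only [Fin.val_rev, Fin.val_castLE, Fin.revPerm_apply]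
    omega
  have hminor : leadingMinor k hk ((Jsp n)⁻¹ * g) =
      (∏ s, -jspSign n (Fin.castLE hk s)) *
        ((Equiv.Perm.sign (Fin.revPerm : Equiv.Perm (Fin k)) : ℤ) * alphaMinor n k hk g) := by
    rw [leadingMinor, hsub, det_mul, det_diagonal, det_permute]
    rfl
  have hsign : ((Equiv.Perm.sign (Fin.revPerm : Equiv.Perm (Fin k)) : ℤ) : F) ≠ 0 := by
    rcases Int.units_eq_one_or (Equiv.Perm.sign (Fin.revPerm : Equiv.Perm (Fin k))) with h | h
      <;> simp [h]
  rw [hminor, mul_ne_zero_iff, mul_ne_zero_iff, Finset.prod_ne_zero_iff]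
  exact ⟨fun h => h.2.2, fun h => ⟨fun s _ => neg_ne_zero.mpr (jspSign_ne_zero _), hsign, h⟩⟩

def finSumFinTwoMul (n : ℕ) : Fin n ⊕ Fin n ≃ Fin (2 * n) :=
  finSumFinEquiv.trans (finCongr (two_mul n).symm)

theorem reindex_Jsp :
    reindex (finSumFinTwoMul n).symm (finSumFinTwoMul n).symm (Jsp (F := F) n) =
      fromBlocks 0 (Fin.revPerm.permMatrix F) (-Fin.revPerm.permMatrix F) 0 := by
  ext (i | i) (j | j) <;> have := i.isLt <;> have := j.isLt <;>
    simp [finSumFinTwoMul, Jsp, PEquiv.toMatrix_apply, Fin.ext_iff] <;>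
    (try split_ifs) <;> first | omega | simp

theorem hasLU_of_symplectic_of_leadingMinor_ne_zero
    {M : Matrix (Fin (2 * n)) (Fin (2 * n)) F} (hM : Mᵀ * Jsp n * M = Jsp n)
    (h : ∀ k (_ : 1 ≤ k) (hk : k ≤ n),
      leadingMinor k (hk.trans (Nat.le_mul_of_pos_left n two_pos)) M ≠ 0) :
    HasLU M := by
  set N := reindex (finSumFinTwoMul n).symm (finSumFinTwoMul n).symm M with hN
  set A := N.toBlocks₁₁
  set B := N.toBlocks₁₂
  set C := N.toBlocks₂₁
  set D := N.toBlocks₂₂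
  set R := (Fin.revPerm : Equiv.Perm (Fin n)).permMatrix F
  have hA : HasLU A := hasLU_of_leadingMinor_ne_zero fun k hk₁ hk => h k hk₁ hk
  have hNs : Nᵀ * fromBlocks 0 R (-R) 0 * N = fromBlocks 0 R (-R) 0 := by
    rw [← reindex_Jsp]
    conv_rhs => rw [← hM]
    simp only [hN, reindex_apply, transpose_submatrix, submatrix_mul_equiv]
  -- The two top blocks of `Nᵀ J N = J` make the Schur complement of `A` equal to `R (Aᵀ)⁻¹ R`.
  rw [← fromBlocks_toBlocks N, fromBlocks_transpose, fromBlocks_multiply,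
    fromBlocks_multiply] at hNs
  have h₁₁ := congrArg toBlocks₁₁ hNs
  have h₁₂ := congrArg toBlocks₁₂ hNs
  simp only [toBlocks_fromBlocks₁₁, toBlocks_fromBlocks₁₂, Matrix.mul_zero,
    Matrix.mul_neg, Matrix.neg_mul, zero_add, add_zero] at h₁₁ h₁₂
  have hS : D - C * A⁻¹ * B = (Aᵀ)⁻¹.submatrix Fin.rev Fin.rev := by
    rw [← permMatrix_revPerm_mul_mul]
    exact schur_complement_eq_conj_inv_transpose permMatrix_revPerm_mul_self
      hA.det_ne_zero.isUnit (neg_add_eq_zero.mp h₁₁).symm (by rw [sub_eq_neg_add]; exact h₁₂)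
  have hLU := (hA.reindex_fromBlocks (hS ▸ hA.inv_transpose_submatrix_rev)).reindex_orderIso
    (Fin.castOrderIso (two_mul n).symm)
  convert hLU using 1
  rw [fromBlocks_toBlocks, hN]
  ext i j
  simp [finSumFinTwoMul]

theorem forall_alphaMinor_ne_zero_iff_hasLU {g : Matrix (Fin (2 * n)) (Fin (2 * n)) F}
    (hg : gᵀ * Jsp n * g = Jsp n) :
    (∀ k (_ : 1 ≤ k) (hk : k ≤ n),
      alphaMinor n k (hk.trans (Nat.le_mul_of_pos_left n two_pos)) g ≠ 0) ↔
      HasLU ((Jsp n)⁻¹ * g) :=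
  ⟨fun h => hasLU_of_symplectic_of_leadingMinor_ne_zero (symplectic_inv_Jsp_mul hg)
      fun k hk₁ hk => (leadingMinor_inv_Jsp_mul_ne_zero_iff _ g).mpr (h k hk₁ hk),
    fun h _ _ _ => (leadingMinor_inv_Jsp_mul_ne_zero_iff _ g).mp (h.leadingMinor_ne_zero _)⟩

end Symplectic

/-- In `G = Sp_{2n}(F)` (matrices `g` with `gᵀ J g = J` for the
antidiagonal form `J = Jsp n`, whose matrix also realizes the longest Weyl element `w₀`),
the set `{g ∈ G : α_k(g) ≠ 0 for all 1 ≤ k ≤ n}` equals the big Bruhat cell `B w₀ N`,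
where `B` is the Borel subgroup of upper-triangular elements of `G` and `N` its
unipotent radical. -/
theorem stmt11 {F : Type*} [Field F] (n : ℕ)
    (g : Matrix (Fin (2 * n)) (Fin (2 * n)) F)
    (hg : g.transpose * Jsp n * g = Jsp n) :
    (∀ (k : ℕ) (hk1 : 1 ≤ k) (hk2 : k ≤ n), alphaMinor n k (by omega) g ≠ 0) ↔
    ∃ b u : Matrix (Fin (2 * n)) (Fin (2 * n)) F,
      b.transpose * Jsp n * b = Jsp n ∧ (∀ i j : Fin (2 * n), j < i → b i j = 0) ∧
      u.transpose * Jsp n * u = Jsp n ∧ (∀ i j : Fin (2 * n), j < i → u i j = 0) ∧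
      (∀ i, u i i = 1) ∧
      g = b * Jsp n * u :=
  (forall_alphaMinor_ne_zero_iff_hasLU hg).trans (hasLU_inv_Jsp_mul_iff hg)
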